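/- arXiv:2602.02911 — 3 statements merged into one kernel-verified Lean document; each statement's English description precedes it below -/
import Mathlib

section
/- Let h₁, h₂, h₃ be integers with h₁ ≠ 0 and h₁⁴ + 3h₂² − 4h₁h₃ = 0, and suppose h₁ divides h₂ and h₁ + h₂/h₁ is even. Then with a = (h₂/h₁ + h₁)/2 and b = (h₂/h₁ − h₁)/2 one has h_j = a^j − b^j for j = 1, 2, 3. -/
theorem stmt_8 (h₁ h₂ h₃ a b : ℤ) (hne : h₁ ≠ 0)
    (hΨ : h₁^4 + 3*h₂^2 - 4*h₁*h₃ = 0)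
    (hdvd : h₁ ∣ h₂) (hpar : Even (h₁ + h₂ / h₁))
    (ha : a = (h₂ / h₁ + h₁) / 2) (hb : b = (h₂ / h₁ - h₁) / 2) :
    h₁ = a - b ∧ h₂ = a^2 - b^2 ∧ h₃ = a^3 - b^3 := by
  obtain ⟨q, hq⟩ := hdvd
  have hqd : h₂ / h₁ = q := by rw [hq, Int.mul_ediv_cancel_left _ hne]
  rw [hqd] at hpar ha hb
  obtain ⟨k, hk⟩ := hpar
  have hq2 : q = 2*k - h₁ := by omega
  have hak : a = k := by rw [ha]; omega
  have hbk : b = k - h₁ := by rw [hb]; omega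
  have h3 : 4*h₃ = h₁^3 + 3*h₁*q^2 := by
    have := hΨ
    rw [hq] at this
    have h4 : h₁ * (4*h₃ - (h₁^3 + 3*h₁*q^2)) = 0 := by ring_nf; linarith [this]
    rcases mul_eq_zero.mp h4 with h | h
    · exact absurd h hne
    · linarith
  refine ⟨by omega, ?_, ?_⟩
  · rw [hak, hbk, hq, hq2]; ring
  · rw [hak, hbk]
    have : 4*h₃ = 4*(k^3 - (k-h₁)^3) := by rw [h3, hq2]; ring
    linarith
end

section
/- Suppose integers x₁, x₂, y₁, y₂ and h₁, h₂ satisfy x₁ + x₂ − y₁ − y₂ = h₁, x₁² + x₂² − y₁² − y₂² = h₂, (x₁² + x₁x₂ + x₂²) − (y₁² + y₁y₂ + y₂²) = 0. Then (4h₁x₁ − (h₁² − h₂))² − (4h₁y₁ + (h₁² + h₂))² = 12h₂h₁². -/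
theorem stmt_10 (x₁ x₂ y₁ y₂ h₁ h₂ : ℤ)
    (e1 : x₁ + x₂ - y₁ - y₂ = h₁)
    (e2 : x₁^2 + x₂^2 - y₁^2 - y₂^2 = h₂)
    (eτ : (x₁^2 + x₁*x₂ + x₂^2) - (y₁^2 + y₁*y₂ + y₂^2) = 0) :
    (4*h₁*x₁ - (h₁^2 - h₂))^2 - (4*h₁*y₁ + (h₁^2 + h₂))^2 = 12*h₂*h₁^2 := by
  subst e1 e2
  linear_combination (-16*x₁*x₂ + 16*x₁*y₂ - 16*x₂^2 + 16*x₂*y₁ + 32*x₂*y₂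
    - 16*y₁*y₂ - 16*y₂^2) * eτ
end

section
/- Suppose integers x₁, x₂, y₁, y₂, h₁, h₂, h₃ satisfy the system x₁^j + x₂^j − y₁^j − y₂^j = h_j for j = 1, 2, 3, and suppose h₁⁴ + 3h₂² − 4h₁h₃ = 0. Then x₁ = y₁ or x₁ = y₂ or x₂ = y₁ or x₂ = y₂. -/
theorem stmt_16 (x₁ x₂ y₁ y₂ h₁ h₂ h₃ : ℤ)
    (e1 : x₁ + x₂ - y₁ - y₂ = h₁)
    (e2 : x₁^2 + x₂^2 - y₁^2 - y₂^2 = h₂)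
    (e3 : x₁^3 + x₂^3 - y₁^3 - y₂^3 = h₃)
    (hΨ : h₁^4 + 3*h₂^2 - 4*h₁*h₃ = 0) :
    x₁ = y₁ ∨ x₁ = y₂ ∨ x₂ = y₁ ∨ x₂ = y₂ := by
  subst e1 e2 e3
  have h12 : (12:ℤ) * ((x₁ - y₁) * ((x₁ - y₂) * ((x₂ - y₁) * (x₂ - y₂)))) = 0 := by
    linear_combination hΨ
  have h : (x₁ - y₁) * ((x₁ - y₂) * ((x₂ - y₁) * (x₂ - y₂))) = 0 := by
    rcases mul_eq_zero.1 h12 with h | h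
    · norm_num at h
    · exact h
  rcases mul_eq_zero.1 h with h | h
  · exact Or.inl (by linarith)
  rcases mul_eq_zero.1 h with h | h
  · exact Or.inr (Or.inl (by linarith))
  rcases mul_eq_zero.1 h with h | h
  · exact Or.inr (Or.inr (Or.inl (by linarith)))
  · exact Or.inr (Or.inr (Or.inr (by linarith)))
end
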